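/- If A is a connected subset of a metric space M, then diam A ≤ H^1(A), where H^1 is one-dimensional Hausdorff measure. -/

import Mathlib

open MeasureTheory

theorem IsPreconnected.edist_le_volume {s : Set ℝ} (hs : IsPreconnected s) {a b : ℝ}
    (ha : a ∈ s) (hb : b ∈ s) : edist a b ≤ volume s :=
  calc edist a b = volume (Set.uIcc a b) := by
        rw [Real.volume_interval, edist_dist, Real.dist_eq, abs_sub_comm]
    _ ≤ volume s := measure_mono (hs.ordConnected.uIcc_subset ha hb)

-- `dist x` is 1-Lipschitz, so it maps `A` onto an interval of `ℝ` without increasing `μH[1]`.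
theorem IsPreconnected.edist_le_hausdorffMeasure_one {M : Type*} [MetricSpace M]
    [MeasurableSpace M] [BorelSpace M] {A : Set M} (hA : IsPreconnected A) {x y : M}
    (hx : x ∈ A) (hy : y ∈ A) : edist x y ≤ μH[1] A := by
  have hlip : LipschitzWith 1 (dist x) := LipschitzWith.dist_right x
  have himage : IsPreconnected (dist x '' A) := hA.image _ hlip.continuous.continuousOn
  calc edist x y = edist (dist x x) (dist x y) := by
        rw [dist_self, edist_dist, edist_dist, dist_zero_left, Real.norm_of_nonneg dist_nonneg]
    _ ≤ volume (dist x '' A) := himage.edist_le_volume (Set.mem_image_of_mem _ hx)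
        (Set.mem_image_of_mem _ hy)
    _ = μH[1] (dist x '' A) := by rw [hausdorffMeasure_real]
    _ ≤ μH[1] A := by simpa using hlip.hausdorffMeasure_image_le zero_le_one A

theorem diam_le_hausdorffMeasure_one_of_connected {M : Type*} [MetricSpace M]
    [MeasurableSpace M] [BorelSpace M] (A : Set M) (hA : IsConnected A) :
    EMetric.diam A ≤ μH[1] A :=
  Metric.ediam_le fun _ hx _ hy => hA.isPreconnected.edist_le_hausdorffMeasure_one hx hy
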